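/- Let m ≥ 0, ν be integers and λ a nonzero zero of L_{m,ν}. Then the derivative satisfies L_{m,ν}'(λ) = J_ν(λ) J_{ν-m}(λ) · ( J_ν'(λ)²/J_ν(λ)² + J_{ν-m}'(λ)²/J_{ν-m}(λ)² + 2 - ((ν-m)² + ν²)/λ² ). In particular, combined with the positivity of the right-hand side for real λ ≠ 0, every nonzero real zero of L_{m,ν} is simple. -/

import Mathlib

open scoped Nat
open Asymptotics MeasureTheory

noncomputable def besselJNat (n : ℕ) (z : ℂ) : ℂ :=
  ∑' r : ℕ, ((-1) ^ r / ((Nat.factorial r : ℂ) * (Nat.factorial (n + r) : ℂ))) * (z / 2) ^ (n + 2 * r)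

/-- Bessel function of the first kind of integer order, with `J_{-n} = (-1)^n J_n`. -/
noncomputable def besselJ (n : ℤ) (z : ℂ) : ℂ :=
  if 0 ≤ n then besselJNat n.toNat z else (-1 : ℂ) ^ n * besselJNat (-n).toNat z

/-- `L_{m,ν}(z) = J_{ν+1}(z) J_{ν-m}(z) - J_ν(z) J_{ν-m-1}(z)`. -/
noncomputable def besselL (m : ℕ) (ν : ℤ) (z : ℂ) : ℂ :=
  besselJ (ν + 1) z * besselJ (ν - m) z - besselJ ν z * besselJ (ν - m - 1) z

/-- `L_{m,ν}(z) = -z^m (d/dz)(z^{-m} J_ν(z) J_{ν-m}(z))`. -/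
noncomputable def besselLd (m : ℕ) (ν : ℤ) (z : ℂ) : ℂ :=
  -z ^ m * deriv (fun w : ℂ => w ^ (-(m : ℤ)) * (besselJ ν w * besselJ (ν - m) w)) z

/-!
Write `P = J_ν J_μ` with `μ = ν - m`. Away from `0`, `L_{m,ν} = m P / z - P'`, so a zero `λ` satisfies
`J_ν'/J_ν + J_μ'/J_μ = m/λ`. Differentiating once more, eliminating `J''` by Bessel's equation and
squaring that relation gives the formula for `L_{m,ν}'(λ)`. For real `x ≠ 0` the bracket is the sum,
over `n = ν, μ`, of `E_n(x) / (x² J_n(x)²)` with `E_n(x) = x² J_n'(x)² + (x² - n²) J_n(x)²`. Bessel's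
equation gives `E_n' = 2 x J_n²`, and `E_n(0) = 0`, so `E_n(x) > 0` wherever `J_n(x) ≠ 0`.

The recurrences `z J_n' = n J_n - z J_{n+1} = z J_{n-1} - n J_n` behind Bessel's equation are read
off the power series, on whose `r`-th term `z d/dz` acts as multiplication by `n + 2r`.
-/

open Set Filter Topology

noncomputable def besselCoeff (n r : ℕ) : ℂ := (-1) ^ r / ((r ! : ℂ) * ((n + r)! : ℂ))

lemma norm_besselCoeff_le (n r : ℕ) : ‖besselCoeff n r‖ ≤ (r ! : ℝ)⁻¹ := by
  have h : (1 : ℝ) ≤ ((n + r)! : ℝ) := by exact_mod_cast Nat.factorial_pos _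
  rw [besselCoeff, norm_div, norm_mul, norm_pow, norm_neg, norm_one, one_pow, Complex.norm_natCast,
    Complex.norm_natCast, one_div, mul_inv]
  exact mul_le_of_le_one_right (by positivity) (inv_le_one_of_one_le₀ h)

lemma natCast_add_mul_besselCoeff_succ (n r : ℕ) :
    ((n : ℂ) + 1 + r) * besselCoeff (n + 1) r = besselCoeff n r := by
  rw [besselCoeff, besselCoeff, show n + 1 + r = n + r + 1 by omega, Nat.factorial_succ]
  have : ((n + r + 1 : ℕ) : ℂ) ≠ 0 := Nat.cast_ne_zero.2 (Nat.succ_ne_zero _)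
  push_cast at this ⊢
  field_simp
  ring

lemma natCast_succ_mul_besselCoeff (n r : ℕ) :
    ((r : ℂ) + 1) * besselCoeff n (r + 1) = -besselCoeff (n + 1) r := by
  rw [besselCoeff, besselCoeff, show n + (r + 1) = n + 1 + r by omega, Nat.factorial_succ r]
  push_cast
  field_simp
  ring

noncomputable def besselTerm (n r : ℕ) (z : ℂ) : ℂ := besselCoeff n r * (z / 2) ^ (n + 2 * r)

lemma norm_besselTerm_le (n r : ℕ) {z : ℂ} {R : ℝ} (hz : ‖z‖ ≤ R) :
    ‖besselTerm n r z‖ ≤ R ^ n * (R ^ 2) ^ r / r ! := by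
  have hR : 0 ≤ R := (norm_nonneg z).trans hz
  have hz2 : ‖z / 2‖ ≤ R := by
    rw [norm_div, Complex.norm_ofNat]; linarith [norm_nonneg z]
  rw [besselTerm, norm_mul, norm_pow, div_eq_mul_inv, mul_comm, ← pow_mul, ← pow_add]
  exact mul_le_mul (pow_le_pow_left₀ (norm_nonneg _) hz2 _) (norm_besselCoeff_le n r)
    (norm_nonneg _) (by positivity)

lemma summable_pow_mul_pow_div_factorial (n : ℕ) (R : ℝ) :
    Summable fun r : ℕ => R ^ n * (R ^ 2) ^ r / r ! := by
  simpa only [mul_div_assoc] using (Real.summable_pow_div_factorial (R ^ 2)).mul_left (R ^ n)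

lemma hasSum_besselTerm (n : ℕ) (z : ℂ) : HasSum (fun r => besselTerm n r z) (besselJNat n z) :=
  (Summable.of_norm_bounded (summable_pow_mul_pow_div_factorial n ‖z‖)
    fun r => norm_besselTerm_le n r le_rfl).hasSum

lemma differentiable_besselTerm (n r : ℕ) : Differentiable ℂ (besselTerm n r) := by
  unfold besselTerm; fun_prop

lemma differentiable_besselJNat (n : ℕ) : Differentiable ℂ (besselJNat n) := fun z =>
  (Complex.differentiableOn_tsum_of_summable_norm (summable_pow_mul_pow_div_factorial n (‖z‖ + 1))
    (fun r => (differentiable_besselTerm n r).differentiableOn) Metric.isOpen_ball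
    (fun r w hw => norm_besselTerm_le n r (mem_ball_zero_iff.1 hw).le)).differentiableAt
    (Metric.isOpen_ball.mem_nhds (by simp : z ∈ Metric.ball (0 : ℂ) (‖z‖ + 1)))

lemma mul_deriv_div_pow {𝕜 : Type*} [NontriviallyNormedField 𝕜] (c : 𝕜) (k : ℕ) (z : 𝕜) :
    z * deriv (fun w => (w / c) ^ k) z = k * (z / c) ^ k := by
  rw [(((hasDerivAt_id' z).div_const c).fun_pow k).deriv]
  cases k with
  | zero => simp
  | succ k => rw [Nat.add_sub_cancel, pow_succ]; push_cast; ring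

lemma mul_deriv_besselTerm (n r : ℕ) (z : ℂ) :
    z * deriv (besselTerm n r) z = ((n + 2 * r : ℕ) : ℂ) * besselTerm n r z := by
  rw [show besselTerm n r = fun w => besselCoeff n r * (w / 2) ^ (n + 2 * r) from rfl,
    deriv_const_mul _ (by fun_prop), mul_left_comm, mul_deriv_div_pow]
  ring

lemma hasSum_mul_deriv_besselTerm (n : ℕ) (z : ℂ) :
    HasSum (fun r => ((n + 2 * r : ℕ) : ℂ) * besselTerm n r z) (z * deriv (besselJNat n) z) := by
  have h := (Complex.hasSum_deriv_of_summable_norm (summable_pow_mul_pow_div_factorial n (‖z‖ + 1))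
    (fun r => (differentiable_besselTerm n r).differentiableOn) Metric.isOpen_ball
    (fun r w hw => norm_besselTerm_le n r (mem_ball_zero_iff.1 hw).le)
    (by simp : z ∈ Metric.ball (0 : ℂ) (‖z‖ + 1))).mul_left z
  simp only [mul_deriv_besselTerm] at h
  exact h

lemma natCast_add_mul_besselTerm_succ (n r : ℕ) (z : ℂ) :
    ((n + 1 + 2 * r : ℕ) : ℂ) * besselTerm (n + 1) r z + (n + 1) * besselTerm (n + 1) r z =
      z * besselTerm n r z := by
  rw [besselTerm, besselTerm, ← natCast_add_mul_besselCoeff_succ n r,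
    show n + 1 + 2 * r = n + 2 * r + 1 by omega, pow_succ]
  push_cast
  ring

lemma natCast_mul_besselTerm_succ (n s : ℕ) (z : ℂ) :
    ((n + 2 * (s + 1) : ℕ) : ℂ) * besselTerm n (s + 1) z - n * besselTerm n (s + 1) z =
      -z * besselTerm (n + 1) s z := by
  rw [besselTerm, besselTerm, show n + 2 * (s + 1) = n + 1 + 2 * s + 1 by omega, pow_succ]
  push_cast
  linear_combination (z * (z / 2) ^ (n + 1 + 2 * s)) * natCast_succ_mul_besselCoeff n s

lemma mul_deriv_besselJNat (n : ℕ) (z : ℂ) :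
    z * deriv (besselJNat n) z = n * besselJNat n z - z * besselJNat (n + 1) z := by
  have h := (hasSum_mul_deriv_besselTerm n z).sub ((hasSum_besselTerm n z).mul_left (n : ℂ))
  rw [← hasSum_nat_add_iff' 1] at h
  simp only [natCast_mul_besselTerm_succ, Finset.sum_range_one, Nat.mul_zero, Nat.add_zero,
    sub_self, sub_zero] at h
  linear_combination h.unique ((hasSum_besselTerm (n + 1) z).mul_left (-z))

lemma mul_deriv_besselJNat_succ (n : ℕ) (z : ℂ) :
    z * deriv (besselJNat (n + 1)) z = z * besselJNat n z - (n + 1) * besselJNat (n + 1) z := by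
  have h := (hasSum_mul_deriv_besselTerm (n + 1) z).add
    ((hasSum_besselTerm (n + 1) z).mul_left ((n : ℂ) + 1))
  simp only [natCast_add_mul_besselTerm_succ] at h
  linear_combination h.unique ((hasSum_besselTerm n z).mul_left z)

lemma besselJ_natCast (n : ℕ) : besselJ n = besselJNat n := by
  funext z; simp [besselJ]

lemma besselJ_neg (ν : ℤ) (z : ℂ) : besselJ (-ν) z = (-1) ^ ν * besselJ ν z := by
  have hneg : (-1 : ℂ) ^ (-ν) = (-1) ^ ν := by rw [← inv_zpow', inv_neg_one]
  have hsq : ((-1 : ℂ) ^ ν) * (-1) ^ ν = 1 := by rw [← mul_zpow]; norm_num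
  rcases lt_trichotomy ν 0 with h | rfl | h
  · simp [besselJ, h.le, not_le.2 h, ← mul_assoc, hsq]
  · simp
  · simp [besselJ, h.le, not_le.2 h, hneg]

lemma differentiable_besselJ (ν : ℤ) : Differentiable ℂ (besselJ ν) := by
  by_cases h : 0 ≤ ν
  · rw [show besselJ ν = besselJNat ν.toNat from funext fun z => if_pos h]
    exact differentiable_besselJNat _
  · rw [show besselJ ν = fun z => (-1) ^ ν * besselJNat (-ν).toNat z from funext fun z => if_neg h]
    exact (differentiable_besselJNat _).const_mul _

lemma deriv_besselJ_neg (ν : ℤ) (z : ℂ) :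
    deriv (besselJ (-ν)) z = (-1) ^ ν * deriv (besselJ ν) z := by
  rw [funext (besselJ_neg ν), deriv_const_mul _ ((differentiable_besselJ ν) z)]

lemma mul_deriv_besselJ_natCast (n : ℕ) (z : ℂ) :
    z * deriv (besselJ n) z = n * besselJ n z - z * besselJ (n + 1) z ∧
      z * deriv (besselJ n) z = z * besselJ (n - 1) z - n * besselJ n z := by
  have hsucc : ((n : ℤ) + 1) = ((n + 1 : ℕ) : ℤ) := by push_cast; rfl
  rw [hsucc, besselJ_natCast, besselJ_natCast]
  refine ⟨mul_deriv_besselJNat n z, ?_⟩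
  cases n with
  | zero =>
    have h := besselJ_neg (1 : ℕ) z
    rw [besselJ_natCast] at h
    simp only [Nat.cast_one, zpow_one, neg_one_mul] at h
    rw [Nat.cast_zero, zero_sub, h, mul_deriv_besselJNat]
    push_cast
    ring
  | succ k =>
    rw [show ((k + 1 : ℕ) : ℤ) - 1 = k by push_cast; ring, besselJ_natCast,
      mul_deriv_besselJNat_succ]
    push_cast
    ring

lemma mul_deriv_besselJ (ν : ℤ) (z : ℂ) :
    z * deriv (besselJ ν) z = ν * besselJ ν z - z * besselJ (ν + 1) z := by
  obtain ⟨n, rfl | rfl⟩ := Int.eq_nat_or_neg ν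
  · exact (mul_deriv_besselJ_natCast n z).1
  · rw [deriv_besselJ_neg, show -(n : ℤ) + 1 = -((n : ℤ) - 1) by ring, besselJ_neg, besselJ_neg,
      zpow_sub_one₀ (by norm_num)]
    push_cast
    linear_combination (-1 : ℂ) ^ (n : ℤ) * (mul_deriv_besselJ_natCast n z).2

lemma mul_deriv_besselJ' (ν : ℤ) (z : ℂ) :
    z * deriv (besselJ ν) z = z * besselJ (ν - 1) z - ν * besselJ ν z := by
  obtain ⟨n, rfl | rfl⟩ := Int.eq_nat_or_neg ν
  · exact (mul_deriv_besselJ_natCast n z).2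
  · rw [deriv_besselJ_neg, show -(n : ℤ) - 1 = -((n : ℤ) + 1) by ring, besselJ_neg, besselJ_neg,
      zpow_add_one₀ (by norm_num)]
    push_cast
    linear_combination (-1 : ℂ) ^ (n : ℤ) * (mul_deriv_besselJ_natCast n z).1

lemma besselJ_ode (ν : ℤ) {z : ℂ} (hz : z ≠ 0) :
    z ^ 2 * deriv (deriv (besselJ ν)) z + z * deriv (besselJ ν) z +
      (z ^ 2 - ν ^ 2) * besselJ ν z = 0 := by
  have hD : deriv (besselJ ν) =ᶠ[𝓝 z] fun w => ν * w⁻¹ * besselJ ν w - besselJ (ν + 1) w := by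
    filter_upwards [eventually_ne_nhds hz] with w hw
    field_simp
    linear_combination mul_deriv_besselJ ν w
  have hD' : HasDerivAt (fun w => ν * w⁻¹ * besselJ ν w - besselJ (ν + 1) w)
      (ν * -(z ^ 2)⁻¹ * besselJ ν z + ν * z⁻¹ * deriv (besselJ ν) z -
        deriv (besselJ (ν + 1)) z) z :=
    (((hasDerivAt_inv hz).const_mul (ν : ℂ)).mul (differentiable_besselJ ν z).hasDerivAt).sub
    (differentiable_besselJ (ν + 1) z).hasDerivAt
  have h := mul_deriv_besselJ' (ν + 1) z
  rw [add_sub_cancel_right] at h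
  rw [hD.deriv_eq, hD'.deriv]
  field_simp
  push_cast at h
  linear_combination (ν + 1) * mul_deriv_besselJ ν z - z * h

lemma neg_pow_mul_deriv_zpow_mul {𝕜 : Type*} [NontriviallyNormedField 𝕜] {f : 𝕜 → 𝕜} {w : 𝕜}
    (m : ℕ) (hf : DifferentiableAt 𝕜 f w) (hw : w ≠ 0) :
    -w ^ m * deriv (fun w => w ^ (-(m : ℤ)) * f w) w = m * f w / w - deriv f w := by
  rw [deriv_fun_mul (differentiableAt_zpow.2 (Or.inl hw)) hf, deriv_zpow, zpow_sub_one₀ hw,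
    zpow_neg, zpow_natCast]
  field_simp
  push_cast
  ring

lemma deriv_neg_pow_mul_deriv_zpow_mul {f : ℂ → ℂ} (hf : Differentiable ℂ f) (m : ℕ) {z : ℂ}
    (hz : z ≠ 0) :
    deriv (fun z => -z ^ m * deriv (fun w => w ^ (-(m : ℤ)) * f w) z) z =
      m * deriv f z / z - m * f z / z ^ 2 - deriv (deriv f) z := by
  have heq : (fun z => -z ^ m * deriv (fun w => w ^ (-(m : ℤ)) * f w) z) =ᶠ[𝓝 z]
      fun w => m * f w / w - deriv f w := by
    filter_upwards [eventually_ne_nhds hz] with w hw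
    exact neg_pow_mul_deriv_zpow_mul m (hf w) hw
  rw [heq.deriv_eq, ((((hf z).hasDerivAt.const_mul (m : ℂ)).fun_div (hasDerivAt_id' z) hz).fun_sub
    (hf.deriv z).hasDerivAt).deriv]
  field_simp

lemma deriv_deriv_fun_mul {f g : ℂ → ℂ} (hf : Differentiable ℂ f) (hg : Differentiable ℂ g)
    (z : ℂ) :
    deriv (deriv fun w => f w * g w) z =
      deriv (deriv f) z * g z + 2 * (deriv f z * deriv g z) + f z * deriv (deriv g) z := by
  rw [show (deriv fun w => f w * g w) = fun w => deriv f w * g w + f w * deriv g w from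
      funext fun w => deriv_fun_mul (hf w) (hg w),
    deriv_fun_add (hf.deriv.fun_mul hg z) (hf.fun_mul hg.deriv z),
    deriv_fun_mul (hf.deriv z) (hg z), deriv_fun_mul (hf z) (hg.deriv z)]
  ring

lemma deriv_besselLd_of_besselLd_eq_zero (m : ℕ) (ν : ℤ) {z : ℂ} (hz : z ≠ 0)
    (hzero : besselLd m ν z = 0) (hJ : besselJ ν z * besselJ (ν - m) z ≠ 0) :
    deriv (besselLd m ν) z = besselJ ν z * besselJ (ν - m) z *
      (deriv (besselJ ν) z ^ 2 / besselJ ν z ^ 2 +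
        deriv (besselJ (ν - m)) z ^ 2 / besselJ (ν - m) z ^ 2 +
        2 - (((ν : ℂ) - m) ^ 2 + (ν : ℂ) ^ 2) / z ^ 2) := by
  set μ := ν - m
  have hμ_cast : (μ : ℂ) = ν - m := by push_cast [μ]; rfl
  have hνd := differentiable_besselJ ν
  have hμd := differentiable_besselJ μ
  have hcrit : z * (deriv (besselJ ν) z * besselJ μ z + besselJ ν z * deriv (besselJ μ) z) =
      m * (besselJ ν z * besselJ μ z) := by
    rw [besselLd, neg_pow_mul_deriv_zpow_mul m (hνd.fun_mul hμd z) hz,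
      deriv_fun_mul (hνd z) (hμd z)] at hzero
    field_simp at hzero
    linear_combination -hzero
  change deriv (fun z => -z ^ m * deriv (fun w => w ^ (-(m : ℤ)) * (besselJ ν w * besselJ μ w)) z) z
    = _
  rw [deriv_neg_pow_mul_deriv_zpow_mul (hνd.fun_mul hμd) m hz, deriv_deriv_fun_mul hνd hμd,
    deriv_fun_mul (hνd z) (hμd z)]
  have hν := besselJ_ode ν hz
  have hμ := besselJ_ode μ hz
  obtain ⟨hνne, hμne⟩ := mul_ne_zero_iff.1 hJ
  set a := besselJ ν z
  set b := besselJ μ z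
  set a' := deriv (besselJ ν) z
  set b' := deriv (besselJ μ) z
  rw [show deriv (deriv (besselJ ν)) z = (-(z * a') - (z ^ 2 - ν ^ 2) * a) / z ^ 2 by
      field_simp; linear_combination hν,
    show deriv (deriv (besselJ μ)) z = (-(z * b') - (z ^ 2 - μ ^ 2) * b) / z ^ 2 by
      field_simp; linear_combination hμ, ← hμ_cast]
  field_simp
  linear_combination (a * b - z * (a' * b + a * b')) * hcrit

lemma besselJ_ofReal_im (ν : ℤ) (x : ℝ) : (besselJ ν x).im = 0 := by
  have hnat : ∀ n : ℕ, besselJNat n x =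
      ((∑' r : ℕ, (-1) ^ r / ((r ! : ℝ) * ((n + r)! : ℝ)) * (x / 2) ^ (n + 2 * r) : ℝ) : ℂ) := by
    intro n
    simp [besselJNat, Complex.ofReal_tsum]
  by_cases h : 0 ≤ ν
  · simp [besselJ, h, hnat]
  · have hsign : (-1 : ℂ) ^ ν = ((-1 : ℝ) ^ ν : ℝ) := by push_cast; rfl
    simp [besselJ, h, hnat, hsign, -Complex.ofReal_zpow]

lemma ofReal_re_besselJ (ν : ℤ) (x : ℝ) : ((besselJ ν x).re : ℂ) = besselJ ν x :=
  Complex.ext rfl (by simp [besselJ_ofReal_im])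

lemma ofReal_re_deriv_besselJ (ν : ℤ) {x : ℝ} (hx : x ≠ 0) :
    ((deriv (besselJ ν) x).re : ℂ) = deriv (besselJ ν) x := by
  have h := congrArg Complex.im (mul_deriv_besselJ ν x)
  simp only [Complex.sub_im, Complex.mul_im, Complex.intCast_re, Complex.intCast_im,
    besselJ_ofReal_im, Complex.ofReal_re, Complex.ofReal_im, mul_zero, zero_mul, add_zero,
    sub_self] at h
  exact Complex.ext rfl (by rw [Complex.ofReal_im, (mul_eq_zero.1 h).resolve_left hx])

noncomputable def besselEnergy (ν : ℤ) (x : ℝ) : ℝ :=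
  x ^ 2 * (deriv (besselJ ν) x).re ^ 2 + (x ^ 2 - ν ^ 2) * (besselJ ν x).re ^ 2

lemma continuous_besselEnergy (ν : ℤ) : Continuous (besselEnergy ν) := by
  have := (differentiable_besselJ ν).continuous
  have := (differentiable_besselJ ν).deriv.continuous
  unfold besselEnergy
  fun_prop

lemma hasDerivAt_besselEnergy (ν : ℤ) {x : ℝ} (hx : x ≠ 0) :
    HasDerivAt (besselEnergy ν) (2 * x * (besselJ ν x).re ^ 2) x := by
  have hJ := ((differentiable_besselJ ν) x).hasDerivAt.real_of_complex
  have hD := ((differentiable_besselJ ν).deriv x).hasDerivAt.real_of_complex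
  have hode := congrArg Complex.re (besselJ_ode ν (Complex.ofReal_ne_zero.2 hx))
  rw [show (x : ℂ) ^ 2 - ν ^ 2 = ((x ^ 2 - ν ^ 2 : ℝ) : ℂ) by push_cast; rfl,
    show (x : ℂ) ^ 2 = ((x ^ 2 : ℝ) : ℂ) by push_cast; rfl, Complex.add_re, Complex.add_re,
    Complex.re_ofReal_mul, Complex.re_ofReal_mul, Complex.re_ofReal_mul, Complex.zero_re] at hode
  refine ((((hasDerivAt_id' x).pow 2).fun_mul (hD.pow 2)).fun_add
    ((((hasDerivAt_id' x).pow 2).sub_const ((ν : ℝ) ^ 2)).fun_mul (hJ.pow 2))).congr_deriv ?_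
  simp only [Pi.pow_apply]
  push_cast
  linear_combination 2 * (deriv (besselJ ν) x).re * hode

lemma lt_of_hasDerivAt_nonneg_of_eventually_pos {f f' : ℝ → ℝ} {a b : ℝ} (hab : a < b)
    (hf : ContinuousOn f (Icc a b)) (hf' : ∀ x ∈ Ioo a b, HasDerivAt f (f' x) x)
    (hnonneg : ∀ x ∈ Ioo a b, 0 ≤ f' x) (hpos : ∀ᶠ x in 𝓝[<] b, 0 < f' x) : f a < f b := by
  obtain ⟨c, hcb, hc⟩ := mem_nhdsLT_iff_exists_Ioo_subset.1 hpos
  have hdb : max a c < b := max_lt hab hcb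
  have hmono : MonotoneOn f (Icc a (max a c)) := by
    refine monotoneOn_of_hasDerivWithinAt_nonneg (f' := f') (convex_Icc _ _)
      (hf.mono (Icc_subset_Icc le_rfl hdb.le)) (fun x hx => ?_) (fun x hx => ?_) <;>
      rw [interior_Icc] at hx
    · exact (hf' x ⟨hx.1, hx.2.trans hdb⟩).hasDerivWithinAt
    · exact hnonneg x ⟨hx.1, hx.2.trans hdb⟩
  have hstrict : StrictMonoOn f (Icc (max a c) b) := by
    refine strictMonoOn_of_hasDerivWithinAt_pos (f' := f') (convex_Icc _ _)
      (hf.mono (Icc_subset_Icc (le_max_left a c) le_rfl)) (fun x hx => ?_) (fun x hx => ?_) <;>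
      rw [interior_Icc] at hx
    · exact (hf' x ⟨(le_max_left a c).trans_lt hx.1, hx.2⟩).hasDerivWithinAt
    · exact hc ⟨(le_max_right a c).trans_lt hx.1, hx.2⟩
  calc f a ≤ f (max a c) :=
        hmono ⟨le_rfl, le_max_left a c⟩ ⟨le_max_left a c, le_rfl⟩ (le_max_left a c)
    _ < f b := hstrict ⟨le_rfl, hdb.le⟩ ⟨hdb.le, le_rfl⟩ hdb

lemma besselEnergy_pos (ν : ℤ) {x : ℝ} (hx : x ≠ 0) (hJ : (besselJ ν x).re ≠ 0) :
    0 < besselEnergy ν x := by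
  -- the recurrence at `z = 0` gives `ν J_ν(0) = 0`
  have h0 : besselEnergy ν (0 * x) = 0 := by
    have h := congrArg Complex.re (mul_deriv_besselJ ν 0)
    rw [zero_mul, zero_mul, sub_zero, ← Complex.ofReal_intCast, Complex.re_ofReal_mul,
      Complex.zero_re] at h
    simp only [besselEnergy, zero_mul, Complex.ofReal_zero]
    linear_combination (ν : ℝ) * (besselJ ν 0).re * h
  have hcont : Continuous fun t : ℝ => (besselJ ν ↑(t * x)).re := by
    have := (differentiable_besselJ ν).continuous
    fun_prop
  -- running along `t ↦ t x` for `t ∈ [0, 1]` treats both signs of `x` at once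
  have hderiv : ∀ t ∈ Ioo (0 : ℝ) 1, HasDerivAt (fun t => besselEnergy ν (t * x))
      (2 * t * (x ^ 2 * (besselJ ν ↑(t * x)).re ^ 2)) t := by
    intro t ht
    have h := (hasDerivAt_besselEnergy ν (mul_ne_zero ht.1.ne' hx)).comp t
      ((hasDerivAt_id' t).mul_const x)
    exact h.congr_deriv (by ring)
  have hev : ∀ᶠ t in 𝓝[<] (1 : ℝ), 0 < 2 * t * (x ^ 2 * (besselJ ν ↑(t * x)).re ^ 2) := by
    have hne : ∀ᶠ t in 𝓝 (1 : ℝ), (besselJ ν ↑(t * x)).re ≠ 0 :=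
      hcont.continuousAt.eventually_ne (by simpa using hJ)
    filter_upwards [nhdsWithin_le_nhds (hne.and (lt_mem_nhds zero_lt_one))] with t ⟨ht, ht0⟩
    positivity
  have key := lt_of_hasDerivAt_nonneg_of_eventually_pos zero_lt_one
    ((continuous_besselEnergy ν).comp (continuous_mul_const x)).continuousOn hderiv
    (fun t ht => by have := ht.1; positivity) hev
  simpa only [Function.comp_apply, one_mul, h0] using key

open scoped ComplexOrder in
lemma sq_deriv_div_sq_besselJ_add_one_sub_pos (ν : ℤ) {x : ℝ} (hx : x ≠ 0) (hJ : besselJ ν x ≠ 0) :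
    0 < deriv (besselJ ν) x ^ 2 / besselJ ν x ^ 2 + 1 - ν ^ 2 / (x : ℂ) ^ 2 := by
  have hre : (besselJ ν x).re ≠ 0 := by rwa [← ofReal_re_besselJ, Complex.ofReal_ne_zero] at hJ
  have h : ((deriv (besselJ ν) x).re : ℂ) ^ 2 / ((besselJ ν x).re : ℂ) ^ 2 + 1 -
      ν ^ 2 / (x : ℂ) ^ 2 = ((besselEnergy ν x / (x ^ 2 * (besselJ ν x).re ^ 2) : ℝ) : ℂ) := by
    unfold besselEnergy
    push_cast
    field_simp
    ring
  rw [← ofReal_re_besselJ, ← ofReal_re_deriv_besselJ ν hx, h]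
  exact_mod_cast div_pos (besselEnergy_pos ν hx hre) (by positivity)

theorem stmt12 (m : ℕ) (ν : ℤ) (lam : ℂ) (hlam : lam ≠ 0)
    (hzero : besselLd m ν lam = 0)
    (hJ : besselJ ν lam * besselJ (ν - m) lam ≠ 0) :
    deriv (besselLd m ν) lam =
      besselJ ν lam * besselJ (ν - m) lam *
        (deriv (besselJ ν) lam ^ 2 / besselJ ν lam ^ 2 +
          deriv (besselJ (ν - m)) lam ^ 2 / besselJ (ν - m) lam ^ 2 +
          2 - (((ν : ℂ) - m) ^ 2 + (ν : ℂ) ^ 2) / lam ^ 2) ∧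
    (lam.im = 0 → deriv (besselLd m ν) lam ≠ 0) := by
  have hderiv := deriv_besselLd_of_besselLd_eq_zero m ν hlam hzero hJ
  refine ⟨hderiv, fun him => ?_⟩
  obtain ⟨x, rfl⟩ : ∃ x : ℝ, (x : ℂ) = lam := ⟨lam.re, Complex.ext rfl him.symm⟩
  have hx : x ≠ 0 := by exact_mod_cast hlam
  obtain ⟨hν, hμ⟩ := mul_ne_zero_iff.1 hJ
  open scoped ComplexOrder in
  have hS := (add_pos (sq_deriv_div_sq_besselJ_add_one_sub_pos ν hx hν)
    (sq_deriv_div_sq_besselJ_add_one_sub_pos (ν - m) hx hμ)).ne'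
  rw [hderiv]
  refine mul_ne_zero hJ ?_
  convert hS using 1
  push_cast
  ring
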